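/- Define R : ℝ² → ℝ by R(y,z) = ∫₀^z 3(s−z)(s+y)(1+(y+s)²)^{−5/2} ds and Q(y,z) = ∫₀^z R(y,r) dr. Then there exists a constant C > 0 such that for all y, z ∈ ℝ: |Q(y,z)| ≤ C|z|³, |R(y,z)| ≤ Cz², |∂_z R(y,z)| ≤ C|z|, and |∂_y R(y,z)| ≤ Cz², where ∂_z R(y,z) denotes the derivative of the function z ↦ R(y,z) at z and ∂_y R(y,z) denotes the derivative of the function y ↦ R(y,z) at y. -/

import Mathlib

/-!
`R(y, ·)` is the first-order Taylor remainder at `y` of `ψ(x) = x (1 + x²)^{-1/2}`, the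
derivative of `√(1 + x²)`: `ψ'' (x) = -3x (1 + x²)^{-5/2}`, so `R(y,z) = ∫₀^z (z - s) ψ''(y + s) ds
= ψ(y + z) - ψ(y) - ψ'(y) z`. Hence `∂_z R(y,z) = ψ'(y + z) - ψ'(y)` and
`∂_y R(y,z) = ψ'(y + z) - ψ'(y) - ψ''(y) z` is the first-order Taylor remainder of `ψ'`.
Since `ψ''` and `ψ'''` are bounded (by `3` and `18`), all four bounds follow from the mean value
inequality.
-/

open MeasureTheory intervalIntegral

/-- The Taylor remainder function
`R(y,z) = ∫₀^z 3(s-z)(s+y)(1+(y+s)²)^{-5/2} ds`. -/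
noncomputable def Rfun (y z : ℝ) : ℝ :=
  ∫ s in (0 : ℝ)..z, 3 * (s - z) * (s + y) * (1 + (y + s) ^ 2) ^ (-(5 : ℝ) / 2)

/-- `Q(y,z) = ∫₀^z R(y,r) dr`. -/
noncomputable def Qfun (y z : ℝ) : ℝ :=
  ∫ t in (0 : ℝ)..z, Rfun y t

section TaylorRemainder

variable {f f' f'' : ℝ → ℝ}

theorem abs_sub_le_of_abs_deriv_le {C : ℝ} (hf : ∀ x, HasDerivAt f (f' x) x)
    (hC : ∀ x, |f' x| ≤ C) (a b : ℝ) : |f a - f b| ≤ C * |a - b| := by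
  simpa only [Real.norm_eq_abs] using
    Convex.norm_image_sub_le_of_norm_hasDerivWithin_le (fun x _ => (hf x).hasDerivWithinAt)
      (fun x _ => hC x) convex_univ (Set.mem_univ b) (Set.mem_univ a)

theorem abs_taylor_remainder_le {L : ℝ} (hf : ∀ x, HasDerivAt f (f' x) x)
    (hf' : ∀ x, HasDerivAt f' (f'' x) x) (hL : ∀ x, |f'' x| ≤ L) (y z : ℝ) :
    |f (y + z) - f y - f' y * z| ≤ L * z ^ 2 := by
  have hL₀ : 0 ≤ L := (abs_nonneg _).trans (hL 0)
  have hderiv : ∀ w, HasDerivAt (fun w => f (y + w) - f' y * w) (f' (y + w) - f' y) w := by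
    intro w
    simpa using (HasDerivAt.comp_const_add y w (hf (y + w))).fun_sub
      ((hasDerivAt_id' w).const_mul (f' y))
  have hbound : ∀ w ∈ Set.uIcc 0 z, ‖f' (y + w) - f' y‖ ≤ L * |z| := fun w hw => by
    have hwz : |w| ≤ |z| := by simpa using Set.abs_sub_left_of_mem_uIcc hw
    calc ‖f' (y + w) - f' y‖ ≤ L * |y + w - y| := abs_sub_le_of_abs_deriv_le hf' hL _ _
      _ ≤ L * |z| := by rw [add_sub_cancel_left]; exact mul_le_mul_of_nonneg_left hwz hL₀
  have := Convex.norm_image_sub_le_of_norm_hasDerivWithin_le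
    (fun w _ => (hderiv w).hasDerivWithinAt) hbound (convex_uIcc 0 z)
    Set.left_mem_uIcc Set.right_mem_uIcc
  simp only [Real.norm_eq_abs, add_zero, mul_zero, sub_zero] at this
  calc |f (y + z) - f y - f' y * z| = |f (y + z) - f' y * z - f y| := by ring_nf
    _ ≤ L * |z| * |z| := this
    _ = L * z ^ 2 := by rw [mul_assoc, ← sq, sq_abs]

theorem integral_sub_mul_deriv_eq_taylor_remainder (hf : ∀ x, HasDerivAt f (f' x) x)
    (hf' : ∀ x, HasDerivAt f' (f'' x) x) (hf'' : Continuous f'') (y z : ℝ) :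
    ∫ s in (0 : ℝ)..z, (z - s) * f'' (y + s) = f (y + z) - f y - f' y * z := by
  have hF : ∀ s, HasDerivAt (fun s => (z - s) * f' (y + s) + f (y + s))
      ((z - s) * f'' (y + s)) s := fun s => by
    refine ((((hasDerivAt_id' s).const_sub z).fun_mul
      (HasDerivAt.comp_const_add y s (hf' (y + s)))).fun_add
      (HasDerivAt.comp_const_add y s (hf (y + s)))).congr_deriv ?_
    ring
  have hint : IntervalIntegrable (fun s => (z - s) * f'' (y + s)) volume 0 z :=
    ((continuous_const.sub continuous_id).mul
      (hf''.comp (continuous_const_add y))).intervalIntegrable _ _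
  rw [integral_eq_sub_of_hasDerivAt (fun s _ => hF s) hint]
  simp only [sub_self, zero_mul, zero_add, add_zero, sub_zero]
  ring

end TaylorRemainder

noncomputable def psi (x : ℝ) : ℝ := x * (1 + x ^ 2) ^ (-(1 : ℝ) / 2)

noncomputable def psi' (x : ℝ) : ℝ := (1 + x ^ 2) ^ (-(3 : ℝ) / 2)

noncomputable def psi'' (x : ℝ) : ℝ := -3 * x * (1 + x ^ 2) ^ (-(5 : ℝ) / 2)

noncomputable def psi''' (x : ℝ) : ℝ :=
  -3 * (1 + x ^ 2) ^ (-(5 : ℝ) / 2) + 15 * x ^ 2 * (1 + x ^ 2) ^ (-(7 : ℝ) / 2)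

section OnePlusSq

variable (x : ℝ)

theorem one_add_sq_pos : 0 < 1 + x ^ 2 := by positivity

theorem hasDerivAt_one_add_sq_rpow (p : ℝ) :
    HasDerivAt (fun x => (1 + x ^ 2) ^ p) (2 * x * p * (1 + x ^ 2) ^ (p - 1)) x := by
  simpa using
    ((hasDerivAt_pow 2 x).const_add 1).rpow_const (p := p) (Or.inl (one_add_sq_pos x).ne')

theorem one_add_sq_rpow_le_one {p : ℝ} (hp : p ≤ 0) : (1 + x ^ 2) ^ p ≤ 1 :=
  Real.rpow_le_one_of_one_le_of_nonpos (by nlinarith [sq_nonneg x]) hp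

theorem mul_one_add_sq_rpow_le {a p q : ℝ} (hax : a ≤ 1 + x ^ 2) (hpq : p = q + 1) :
    a * (1 + x ^ 2) ^ q ≤ (1 + x ^ 2) ^ p := by
  rw [hpq, Real.rpow_add_one (one_add_sq_pos x).ne', mul_comm]
  exact mul_le_mul_of_nonneg_left hax (Real.rpow_nonneg (one_add_sq_pos x).le _)

end OnePlusSq

theorem hasDerivAt_psi (x : ℝ) : HasDerivAt psi (psi' x) x := by
  refine ((hasDerivAt_id' x).fun_mul
    (hasDerivAt_one_add_sq_rpow x (-(1 : ℝ) / 2))).congr_deriv ?_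
  rw [psi', show -(1 : ℝ) / 2 = -(3 : ℝ) / 2 + 1 by norm_num,
    Real.rpow_add_one (one_add_sq_pos x).ne',
    show -(3 : ℝ) / 2 + 1 - 1 = -(3 : ℝ) / 2 by norm_num]
  ring

theorem hasDerivAt_psi' (x : ℝ) : HasDerivAt psi' (psi'' x) x := by
  refine (hasDerivAt_one_add_sq_rpow x (-(3 : ℝ) / 2)).congr_deriv ?_
  rw [psi'', show -(3 : ℝ) / 2 - 1 = -(5 : ℝ) / 2 by norm_num]
  ring

theorem hasDerivAt_psi'' (x : ℝ) : HasDerivAt psi'' (psi''' x) x := by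
  refine (((hasDerivAt_id' x).const_mul (-3)).fun_mul
    (hasDerivAt_one_add_sq_rpow x (-(5 : ℝ) / 2))).congr_deriv ?_
  rw [psi''', show -(5 : ℝ) / 2 - 1 = -(7 : ℝ) / 2 by norm_num]
  ring

theorem continuous_psi'' : Continuous psi'' :=
  (continuous_const.mul continuous_id).mul <|
    (continuous_const.add (continuous_pow 2)).rpow_const fun x => Or.inl (one_add_sq_pos x).ne'

theorem abs_psi''_le (x : ℝ) : |psi'' x| ≤ 3 := by
  have hB := Real.rpow_pos_of_pos (one_add_sq_pos x) (-(5 : ℝ) / 2)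
  calc |psi'' x| = 3 * (|x| * (1 + x ^ 2) ^ (-(5 : ℝ) / 2)) := by
        rw [psi'', abs_mul, abs_mul, abs_of_pos hB, abs_neg, abs_of_pos three_pos]; ring
    _ ≤ 3 * (1 + x ^ 2) ^ (-(3 : ℝ) / 2) := by
        gcongr
        exact mul_one_add_sq_rpow_le x
          (by nlinarith [sq_abs x, sq_nonneg (|x| - 1)]) (by norm_num)
    _ ≤ 3 := by linarith [one_add_sq_rpow_le_one x (p := -(3 : ℝ) / 2) (by norm_num)]

theorem abs_psi'''_le (x : ℝ) : |psi''' x| ≤ 18 := by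
  have hB := Real.rpow_pos_of_pos (one_add_sq_pos x) (-(5 : ℝ) / 2)
  have hB' := Real.rpow_pos_of_pos (one_add_sq_pos x) (-(7 : ℝ) / 2)
  have hx2 : x ^ 2 * (1 + x ^ 2) ^ (-(7 : ℝ) / 2) ≤ (1 + x ^ 2) ^ (-(5 : ℝ) / 2) :=
    mul_one_add_sq_rpow_le x (by linarith) (by norm_num)
  have hB1 := one_add_sq_rpow_le_one x (p := -(5 : ℝ) / 2) (by norm_num)
  rw [psi''', abs_le]
  constructor <;> nlinarith [sq_nonneg x]

theorem Rfun_eq (y z : ℝ) : Rfun y z = psi (y + z) - psi y - psi' y * z := by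
  rw [← integral_sub_mul_deriv_eq_taylor_remainder hasDerivAt_psi hasDerivAt_psi'
    continuous_psi'', Rfun]
  congr 1
  funext s
  rw [psi'', add_comm y s]
  ring

theorem hasDerivAt_Rfun_right (y z : ℝ) :
    HasDerivAt (fun w => Rfun y w) (psi' (y + z) - psi' y) z := by
  simp only [Rfun_eq]
  simpa using ((HasDerivAt.comp_const_add y z (hasDerivAt_psi (y + z))).sub_const (psi y)).fun_sub
    ((hasDerivAt_id' z).const_mul (psi' y))

theorem hasDerivAt_Rfun_left (y z : ℝ) :
    HasDerivAt (fun w => Rfun w z) (psi' (y + z) - psi' y - psi'' y * z) y := by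
  simp only [Rfun_eq]
  exact ((HasDerivAt.comp_add_const y z (hasDerivAt_psi (y + z))).fun_sub
    (hasDerivAt_psi y)).fun_sub ((hasDerivAt_psi' y).mul_const z)

theorem abs_Rfun_le (y z : ℝ) : |Rfun y z| ≤ 3 * z ^ 2 := by
  rw [Rfun_eq]
  exact abs_taylor_remainder_le hasDerivAt_psi hasDerivAt_psi' abs_psi''_le y z

theorem abs_Qfun_le (y z : ℝ) : |Qfun y z| ≤ 3 * |z| ^ 3 := by
  have h := norm_integral_le_of_norm_le_const (a := 0) (b := z) (C := 3 * z ^ 2)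
    (f := fun t => Rfun y t) fun t ht => by
      have htz : |t| ≤ |z| := by
        simpa using Set.abs_sub_left_of_mem_uIcc (Set.uIoc_subset_uIcc ht)
      calc ‖Rfun y t‖ ≤ 3 * t ^ 2 := abs_Rfun_le y t
        _ ≤ 3 * z ^ 2 := by gcongr 3 * ?_; exact sq_le_sq.mpr htz
  rw [Real.norm_eq_abs, sub_zero] at h
  calc |Qfun y z| ≤ 3 * z ^ 2 * |z| := h
    _ = 3 * |z| ^ 3 := by rw [← sq_abs z]; ring

/-- Uniform bounds `|Q(y,z)| ≤ C|z|³`, `|R(y,z)| ≤ Cz²`,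
`|∂_z R(y,z)| ≤ C|z|`, `|∂_y R(y,z)| ≤ Cz²`. -/
theorem stmt13 : ∃ C : ℝ, 0 < C ∧ ∀ y z : ℝ,
    |Qfun y z| ≤ C * |z| ^ 3 ∧
    |Rfun y z| ≤ C * z ^ 2 ∧
    |deriv (fun w => Rfun y w) z| ≤ C * |z| ∧
    |deriv (fun w => Rfun w z) y| ≤ C * z ^ 2 := by
  refine ⟨18, by norm_num, fun y z => ⟨?_, ?_, ?_, ?_⟩⟩
  · exact (abs_Qfun_le y z).trans (by gcongr; norm_num)
  · exact (abs_Rfun_le y z).trans (by gcongr; norm_num)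
  · rw [(hasDerivAt_Rfun_right y z).deriv]
    calc |psi' (y + z) - psi' y| ≤ 3 * |y + z - y| :=
          abs_sub_le_of_abs_deriv_le hasDerivAt_psi' abs_psi''_le _ _
      _ ≤ 18 * |z| := by rw [add_sub_cancel_left]; gcongr; norm_num
  · rw [(hasDerivAt_Rfun_left y z).deriv]
    exact abs_taylor_remainder_le hasDerivAt_psi' hasDerivAt_psi'' abs_psi'''_le y z
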